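/- Let θ ~ N(μ̂, σ²) with σ² = log T/(n+1) for integers n ≥ 1, T ≥ 2, and suppose μ̂ ≥ μ - √(2 log T / n). Then P(θ ≥ μ) ≥ P(θ ≥ μ̂ + √(2 log T / n)) ≥ (1/√(2π)) · (z/(z²+1)) · e^{-z²/2} with z = √(2(n+1)/n) ≤ 2, hence P(θ ≥ μ) is bounded below by a universal positive constant (e.g., 1/(3·10⁴)). -/

import Mathlib

/-! The threshold `μ̂ + √(2 log T / n)` lies above `μ` and equals `μ̂ + σ z` with
`σ² = log T / (n + 1)`, so `P(θ ≥ μ) ≥ P(θ ≥ μ̂ + σ z) = P(Z ≥ z)` for a standard Gaussian `Z`,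
which is at least the Mills-ratio bound `φ(z) z / (z² + 1)`. For `z ∈ [1, 2]` its three factors
are at least `1/3`, `2/5` and `1/8`. -/

open ProbabilityTheory MeasureTheory Real Filter Set NNReal Topology

lemma hasDerivAt_div_sq_add_one_mul_exp (t : ℝ) :
    HasDerivAt (fun t : ℝ => t / (t ^ 2 + 1) * exp (-t ^ 2 / 2))
      (-(1 - 2 / (t ^ 2 + 1) ^ 2) * exp (-t ^ 2 / 2)) t := by
  have hq : HasDerivAt (fun t : ℝ => t / (t ^ 2 + 1)) ((1 - t ^ 2) / (t ^ 2 + 1) ^ 2) t := by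
    refine ((hasDerivAt_id' t).div ((hasDerivAt_pow 2 t).add_const 1) (by positivity)).congr_deriv ?_
    norm_num
    ring
  have hs : HasDerivAt (fun t : ℝ => -t ^ 2 / 2) (-t) t := by
    refine ((hasDerivAt_pow 2 t).neg.div_const 2).congr_deriv ?_
    norm_num
    ring
  refine (hq.mul hs.exp).congr_deriv ?_
  field_simp
  ring

lemma abs_div_sq_add_one_le_one (t : ℝ) : |t / (t ^ 2 + 1)| ≤ 1 := by
  have h : 0 < t ^ 2 + 1 := by positivity
  rw [abs_div, abs_of_pos h, div_le_one h]
  nlinarith [sq_abs t, sq_nonneg (|t| - 1)]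

lemma tendsto_div_sq_add_one_mul_exp_atTop :
    Tendsto (fun t : ℝ => t / (t ^ 2 + 1) * exp (-t ^ 2 / 2)) atTop (𝓝 0) := by
  have hexp : Tendsto (fun t : ℝ => exp (-t ^ 2 / 2)) atTop (𝓝 0) :=
    tendsto_exp_atBot.comp <|
      (tendsto_neg_atTop_atBot.comp (tendsto_pow_atTop two_ne_zero)).atBot_div_const two_pos
  refine squeeze_zero_norm (fun t => ?_) hexp
  rw [norm_mul, norm_of_nonneg (exp_pos _).le]
  exact mul_le_of_le_one_left (exp_pos _).le (abs_div_sq_add_one_le_one t)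

lemma gaussianPDFReal_zero_one (x : ℝ) :
    gaussianPDFReal 0 1 x = 1 / √(2 * π) * exp (-x ^ 2 / 2) := by
  simp [gaussianPDFReal]

lemma abs_one_sub_two_div_sq_add_one_sq_le_one (t : ℝ) :
    |1 - 2 / (t ^ 2 + 1) ^ 2| ≤ 1 := by
  have h1 : 1 ≤ (t ^ 2 + 1) ^ 2 := one_le_pow₀ (by nlinarith [sq_nonneg t])
  have h2 : 2 / (t ^ 2 + 1) ^ 2 ≤ 2 := div_le_self (by norm_num) h1
  have h3 : 0 ≤ 2 / (t ^ 2 + 1) ^ 2 := by positivity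
  rw [abs_le]; constructor <;> linarith

noncomputable def millsLowerBound (a : ℝ) : ℝ :=
  1 / √(2 * π) * (a / (a ^ 2 + 1)) * exp (-a ^ 2 / 2)

/-- `-φ(t) t / (t² + 1)` is an antiderivative of `(1 - 2 / (t² + 1)²) φ(t) ≤ φ(t)`. -/
theorem millsLowerBound_le_integral_Ioi (a : ℝ) :
    millsLowerBound a ≤ ∫ x in Ioi a, gaussianPDFReal 0 1 x := by
  let g : ℝ → ℝ := fun t => -(1 / √(2 * π) * (t / (t ^ 2 + 1) * exp (-t ^ 2 / 2)))
  let g' : ℝ → ℝ := fun t => (1 - 2 / (t ^ 2 + 1) ^ 2) * gaussianPDFReal 0 1 t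
  have hderiv : ∀ t, HasDerivAt g (g' t) t := fun t => by
    refine ((hasDerivAt_div_sq_add_one_mul_exp t).const_mul _).neg.congr_deriv ?_
    simp only [g', gaussianPDFReal_zero_one]
    ring
  have hg'_le : ∀ t, |g' t| ≤ gaussianPDFReal 0 1 t := fun t => by
    rw [abs_mul, abs_of_nonneg (gaussianPDFReal_nonneg _ _ _)]
    exact mul_le_of_le_one_left (gaussianPDFReal_nonneg _ _ _)
      (abs_one_sub_two_div_sq_add_one_sq_le_one t)
  have hpdf : IntegrableOn (gaussianPDFReal 0 1) (Ioi a) :=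
    (integrable_gaussianPDFReal 0 1).integrableOn
  have hg' : IntegrableOn g' (Ioi a) :=
    hpdf.mono' (by fun_prop) (ae_of_all _ fun t => by simpa using hg'_le t)
  have hlim : Tendsto g atTop (𝓝 0) := by
    simpa only [mul_zero, neg_zero] using
      (tendsto_div_sq_add_one_mul_exp_atTop.const_mul (1 / √(2 * π))).neg
  have hftc := integral_Ioi_of_hasDerivAt_of_tendsto
    (hderiv a).continuousAt.continuousWithinAt (fun t _ => hderiv t) hg' hlim
  calc millsLowerBound a = ∫ x in Ioi a, g' x := by
        rw [hftc, millsLowerBound]; ring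
    _ ≤ ∫ x in Ioi a, gaussianPDFReal 0 1 x :=
        setIntegral_mono_on hg' hpdf measurableSet_Ioi fun t _ => (le_abs_self _).trans (hg'_le t)

lemma gaussianReal_map_standardize (m : ℝ) {v : ℝ≥0} (hv : v ≠ 0) :
    (gaussianReal m v).map (fun x => (x - m) / √v) = gaussianReal 0 1 := by
  have : (fun x => (x - m) / √v) = (· / √(v : ℝ)) ∘ (· - m) := rfl
  rw [this, ← Measure.map_map (by fun_prop) (by fun_prop), gaussianReal_map_sub_const,
    gaussianReal_map_div_const]
  congr 1
  · simp
  · ext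
    simp [hv]

lemma gaussianReal_Ici_add_sqrt_mul (m : ℝ) {v : ℝ≥0} (hv : v ≠ 0) (z : ℝ) :
    gaussianReal m v (Ici (m + √v * z)) = gaussianReal 0 1 (Ici z) := by
  have hσ : 0 < √(v : ℝ) := sqrt_pos.2 (by positivity)
  rw [← gaussianReal_map_standardize m hv, Measure.map_apply (by fun_prop) measurableSet_Ici]
  congr 1
  ext x
  simp only [mem_Ici, mem_preimage, le_div_iff₀ hσ]
  constructor <;> intro h <;> linarith

theorem millsLowerBound_le_gaussianReal_Ici (m : ℝ) {v : ℝ≥0} (hv : v ≠ 0) (z : ℝ) :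
    millsLowerBound z ≤ (gaussianReal m v (Ici (m + √v * z))).toReal := by
  rw [gaussianReal_Ici_add_sqrt_mul m hv, gaussianReal_apply_eq_integral 0 one_ne_zero,
    ENNReal.toReal_ofReal (setIntegral_nonneg measurableSet_Ici
      fun x _ => gaussianPDFReal_nonneg _ _ _), integral_Ici_eq_integral_Ioi]
  exact millsLowerBound_le_integral_Ioi z

lemma one_div_le_millsLowerBound {z : ℝ} (h1 : 1 ≤ z) (h2 : z ≤ 2) :
    1 / (3 * 10 ^ 4) ≤ millsLowerBound z := by
  have hπ : 1 / 3 ≤ 1 / √(2 * π) :=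
    one_div_le_one_div_of_le (by positivity) (sqrt_le_iff.2 ⟨by norm_num, by nlinarith [pi_le_four]⟩)
  have hratio : 2 / 5 ≤ z / (z ^ 2 + 1) := by
    rw [div_le_div_iff₀ (by norm_num) (by positivity)]
    nlinarith
  have hexp : 1 / 8 ≤ exp (-z ^ 2 / 2) :=
    calc 1 / 8 ≤ exp (-1) ^ 2 := by nlinarith [exp_neg_one_gt_d9]
      _ = exp (-2) := by rw [← exp_nat_mul]; norm_num
      _ ≤ exp (-z ^ 2 / 2) := exp_le_exp.2 (by nlinarith)
  calc 1 / (3 * 10 ^ 4) ≤ 1 / 3 * (2 / 5) * (1 / 8) := by norm_num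
    _ ≤ millsLowerBound z := by unfold millsLowerBound; gcongr

lemma one_le_sqrt_two_mul_add_one_div {x : ℝ} (hx : 0 < x) : 1 ≤ √(2 * (x + 1) / x) :=
  one_le_sqrt.2 ((one_le_div hx).2 (by linarith))

lemma sqrt_two_mul_add_one_div_le_two {x : ℝ} (hx : 1 ≤ x) : √(2 * (x + 1) / x) ≤ 2 :=
  sqrt_le_iff.2 ⟨by norm_num, (div_le_iff₀ (by positivity)).2 (by linarith)⟩

lemma sqrt_div_add_one_mul_sqrt_two_mul_add_one_div (L : ℝ) {x : ℝ} (hx : 0 < x) :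
    √(L / (x + 1)) * √(2 * (x + 1) / x) = √(2 * L / x) := by
  rw [← sqrt_mul' _ (by positivity)]
  congr 1
  field_simp

/-- If `θ ~ N(μ̂, log T/(n+1))` with `n ≥ 1`, `T ≥ 2` and
`μ̂ ≥ μ - √(2 log T / n)`, then `P(θ ≥ μ)` is at least
`P(θ ≥ μ̂ + √(2 log T / n))`, which is at least the Gaussian anti-concentration
bound at `z = √(2(n+1)/n) ≤ 2`; in particular `P(θ ≥ μ) ≥ 1/(3·10⁴)`. -/
theorem gaussian_posterior_optimism
    (n T : ℕ) (hn : 1 ≤ n) (hT : 2 ≤ T) (μ μhat : ℝ)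
    (hμhat : μ - Real.sqrt (2 * Real.log T / n) ≤ μhat) :
    (let z : ℝ := Real.sqrt (2 * (n + 1) / n)
     let Pθ : Measure ℝ := gaussianReal μhat (Real.log T / (n + 1)).toNNReal
     (Pθ {x | μhat + Real.sqrt (2 * Real.log T / n) ≤ x}).toReal ≤
        (Pθ {x | μ ≤ x}).toReal ∧
     z ≤ 2 ∧
     (1 / Real.sqrt (2 * Real.pi)) * (z / (z ^ 2 + 1)) * Real.exp (-z ^ 2 / 2) ≤
        (Pθ {x | μhat + Real.sqrt (2 * Real.log T / n) ≤ x}).toReal ∧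
     1 / (3 * 10 ^ 4) ≤ (Pθ {x | μ ≤ x}).toReal) := by
  intro z Pθ
  have hn' : (1 : ℝ) ≤ n := by exact_mod_cast hn
  have hvar : 0 < log T / (n + 1) := div_pos (log_pos (by exact_mod_cast hT)) (by positivity)
  have hthreshold : {x | μhat + √(2 * log T / n) ≤ x} =
      Ici (μhat + √((log T / (n + 1)).toNNReal : ℝ) * z) := by
    rw [coe_toNNReal _ hvar.le, sqrt_div_add_one_mul_sqrt_two_mul_add_one_div _ (by positivity)]
    rfl
  have hmono : (Pθ {x | μhat + √(2 * log T / n) ≤ x}).toReal ≤ (Pθ {x | μ ≤ x}).toReal :=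
    ENNReal.toReal_mono (measure_ne_top _ _)
      (measure_mono fun x (hx : _ ≤ x) => show μ ≤ x by linarith)
  have htail : millsLowerBound z ≤ (Pθ {x | μhat + √(2 * log T / n) ≤ x}).toReal := by
    rw [hthreshold]
    exact millsLowerBound_le_gaussianReal_Ici μhat (by simpa using hvar) z
  have hz2 : z ≤ 2 := sqrt_two_mul_add_one_div_le_two hn'
  have hbound := one_div_le_millsLowerBound (one_le_sqrt_two_mul_add_one_div (by positivity)) hz2
  exact ⟨hmono, hz2, htail, hbound.trans (htail.trans hmono)⟩
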